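/- Let t ∈ C with |t| ≤ 1, λ ∈ [0,1), and 0 < β ≤ γ < 1. Then |γt(1-λ)/(1-γλt)|² ≤ (γ²(1-βλ)²)/(β²(1-γλ)²) · |βt(1-λ)/(1-βλt)|². -/

import Mathlib

/-! With `a = βλ ≤ b = γλ`, both sides share the factor `γ ‖t‖ (1 - λ)`, so the claim reduces to
`(1 - b) ‖1 - a t‖ ≤ (1 - a) ‖1 - b t‖` on the closed unit disk. Squared, the difference of the two
sides is linear in `x = Re t` and `s = ‖t‖²`; using `x² ≤ s` it is bounded below by
`(b - a) (1 - x) ((2 - a - b) - (a + b - 2ab) x) ≥ 0`, with equality at `t = 1`. -/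

open Complex

lemma norm_one_sub_ofReal_mul_sq (a : ℝ) (t : ℂ) :
    ‖1 - (a : ℂ) * t‖ ^ 2 = 1 - 2 * a * t.re + a ^ 2 * ‖t‖ ^ 2 := by
  simp only [Complex.sq_norm, normSq_apply, sub_re, sub_im, one_re, one_im, re_ofReal_mul,
    im_ofReal_mul]
  ring

lemma norm_one_sub_ofReal_mul_pos {a : ℝ} {t : ℂ} (ha₀ : 0 ≤ a) (ha₁ : a < 1) (ht : ‖t‖ ≤ 1) :
    0 < ‖1 - (a : ℂ) * t‖ := by
  have : ‖(a : ℂ) * t‖ < 1 := by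
    rw [norm_mul, norm_real, Real.norm_of_nonneg ha₀]
    nlinarith [norm_nonneg t]
  calc (0 : ℝ) < ‖(1 : ℂ)‖ - ‖(a : ℂ) * t‖ := by rw [norm_one]; linarith
    _ ≤ ‖1 - (a : ℂ) * t‖ := norm_sub_norm_le _ _

lemma sub_mul_norm_one_sub_ofReal_mul_le {a b : ℝ} {t : ℂ} (ha : 0 ≤ a) (hab : a ≤ b)
    (hb : b < 1) (ht : ‖t‖ ≤ 1) :
    (1 - b) * ‖1 - (a : ℂ) * t‖ ≤ (1 - a) * ‖1 - (b : ℂ) * t‖ := by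
  have hx : t.re ≤ 1 := (re_le_norm t).trans ht
  have hxs : t.re ^ 2 ≤ ‖t‖ ^ 2 := sq_le_sq' (neg_le_of_abs_le (abs_re_le_norm t)) (re_le_norm t)
  have hQ : 0 ≤ a + b - 2 * a * b := by nlinarith
  have hPQ : 0 ≤ (2 - a - b) - (a + b - 2 * a * b) * t.re := by nlinarith
  have hsq : ((1 - b) * ‖1 - (a : ℂ) * t‖) ^ 2 ≤ ((1 - a) * ‖1 - (b : ℂ) * t‖) ^ 2 := by
    rw [mul_pow, mul_pow, norm_one_sub_ofReal_mul_sq, norm_one_sub_ofReal_mul_sq]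
    -- the difference of the two sides is `(b - a) ((1 - x) (P - Q x) + Q (‖t‖² - x²))`,
    -- with `x = Re t` and `Q`, `P - Q x` the quantities of `hQ`, `hPQ`
    linear_combination mul_nonneg (sub_nonneg.2 hab)
      (add_nonneg (mul_nonneg (sub_nonneg.2 hx) hPQ) (mul_nonneg hQ (sub_nonneg.2 hxs)))
  exact (pow_le_pow_iff_left₀ (by positivity)
    (by nlinarith [norm_nonneg (1 - (b : ℂ) * t)]) two_ne_zero).1 hsq

lemma norm_div_one_sub_ofReal_mul_le {a b : ℝ} {t : ℂ} (z : ℂ) (ha : 0 ≤ a) (hab : a ≤ b)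
    (hb : b < 1) (ht : ‖t‖ ≤ 1) :
    ‖z / (1 - (b : ℂ) * t)‖ ≤ (1 - a) / (1 - b) * ‖z / (1 - (a : ℂ) * t)‖ := by
  have hA := norm_one_sub_ofReal_mul_pos ha (hab.trans_lt hb) ht
  have hB := norm_one_sub_ofReal_mul_pos (ha.trans hab) hb ht
  rw [norm_div, norm_div, div_mul_div_comm, div_le_div_iff₀ hB (by nlinarith)]
  nlinarith [mul_le_mul_of_nonneg_left (sub_mul_norm_one_sub_ofReal_mul_le ha hab hb ht)
    (norm_nonneg z)]

theorem stmt_17 (t : ℂ) (ht : ‖t‖ ≤ 1)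
    (lam : ℝ) (hlam : lam ∈ Set.Ico (0 : ℝ) 1)
    (γ β : ℝ) (hβ : 0 < β) (hβγ : β ≤ γ) (hγ : γ < 1) :
    ‖(γ : ℂ) * t * (1 - (lam : ℂ)) / (1 - (γ : ℂ) * (lam : ℂ) * t)‖ ^ 2 ≤
      (γ ^ 2 * (1 - β * lam) ^ 2) / (β ^ 2 * (1 - γ * lam) ^ 2) *
        ‖(β : ℂ) * t * (1 - (lam : ℂ)) / (1 - (β : ℂ) * (lam : ℂ) * t)‖ ^ 2 := by
  obtain ⟨hlam₀, hlam₁⟩ := hlam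
  have hγ₀ : 0 < γ := hβ.trans_le hβγ
  have key := norm_div_one_sub_ofReal_mul_le ((γ : ℂ) * t * (1 - (lam : ℂ)))
    (mul_nonneg hβ.le hlam₀) (mul_le_mul_of_nonneg_right hβγ hlam₀)
    (by nlinarith : γ * lam < 1) ht
  have hrescale : ‖(γ : ℂ) * t * (1 - (lam : ℂ)) / (1 - (β : ℂ) * (lam : ℂ) * t)‖ =
      γ / β * ‖(β : ℂ) * t * (1 - (lam : ℂ)) / (1 - (β : ℂ) * (lam : ℂ) * t)‖ := by
    simp only [norm_div, norm_mul, norm_real, Real.norm_of_nonneg hγ₀.le,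
      Real.norm_of_nonneg hβ.le]
    field_simp
  push_cast at key
  rw [hrescale] at key
  calc _ ≤ ((1 - β * lam) / (1 - γ * lam) * (γ / β *
          ‖(β : ℂ) * t * (1 - (lam : ℂ)) / (1 - (β : ℂ) * (lam : ℂ) * t)‖)) ^ 2 :=
        pow_le_pow_left₀ (norm_nonneg _) key 2
    _ = _ := by field_simp
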